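/- arXiv:1809.07545 — 8 statements merged into one kernel-verified Lean document; each statement's English description precedes it below -/
import Mathlib

section
/- Let X : [0,1] → [0,1] be non-decreasing with 0 ≤ X(v) ≤ v for all v, and suppose X(v)(v - X(v)) = 0 for almost every v ∈ [0,1]. Then there exists v* ∈ [0,1] such that X(v) = 0 for all v < v* and X(v) = v for all v > v*. -/
open Set MeasureTheory

/-! The cutoff is `v* = sup {v | X v = 0}`. Below it, monotonicity and `X ≥ 0` force `X = 0`.
Above it `X ≠ 0`, so `X w = w` for a.e. `w`; if `X v < v` for some `v > v*`, picking such a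
`w ∈ (max v* (X v), v)` gives `X v < w = X w ≤ X v`. -/

lemma Real.exists_mem_Ioo_of_ae_restrict {s : Set ℝ} {p : ℝ → Prop}
    (hp : ∀ᵐ x ∂volume.restrict s, p x) {c d : ℝ} (hcd : c < d) (hsub : Ioo c d ⊆ s) :
    ∃ x ∈ Ioo c d, p x :=
  Measure.exists_mem_of_measure_ne_zero_of_ae (by simpa using hcd)
    (ae_restrict_of_ae_restrict_of_subset hsub hp)

lemma MonotoneOn.le_of_ae_restrict_eq_self {X : ℝ → ℝ} {s : Set ℝ} {a v : ℝ}
    (hmono : MonotoneOn X s) (hav : a < v) (hsub : Ioc a v ⊆ s)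
    (hae : ∀ᵐ w ∂volume.restrict (Ioo a v), X w = w) : v ≤ X v := by
  by_contra! hlt
  have hv : v ∈ s := hsub ⟨hav, le_rfl⟩
  obtain ⟨w, hw, hXw⟩ := Real.exists_mem_Ioo_of_ae_restrict hae (max_lt hav hlt)
    (Ioo_subset_Ioo_left (le_max_left _ _))
  have hws : w ∈ s := hsub ⟨(le_max_left _ _).trans_lt hw.1, hw.2.le⟩
  have hXwv : X w ≤ X v := hmono hws hv hw.2.le
  linarith [(le_max_right a (X v)).trans_lt hw.1]

/-- A non-decreasing `X` with `0 ≤ X(v) ≤ v` such that a.e. `X(v) ∈ {0, v}` is a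
threshold schedule: zero below some cutoff `v*`, the identity above it. -/
theorem stmt_7 (X : ℝ → ℝ)
    (hXmono : MonotoneOn X (Set.Icc 0 1))
    (hX : ∀ v ∈ Set.Icc (0 : ℝ) 1, 0 ≤ X v ∧ X v ≤ v)
    (hae : ∀ᵐ v ∂(MeasureTheory.volume.restrict (Set.Icc (0 : ℝ) 1)),
      X v * (v - X v) = 0) :
    ∃ vstar ∈ Set.Icc (0 : ℝ) 1,
      (∀ v ∈ Set.Icc (0 : ℝ) 1, v < vstar → X v = 0) ∧
      (∀ v ∈ Set.Icc (0 : ℝ) 1, vstar < v → X v = v) := by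
  set Z := {v ∈ Icc (0 : ℝ) 1 | X v = 0}
  have hZ0 : (0 : ℝ) ∈ Z := ⟨left_mem_Icc.2 zero_le_one, by linarith [hX 0 ⟨le_rfl, zero_le_one⟩]⟩
  have hZbdd : BddAbove Z := ⟨1, fun v hv => hv.1.2⟩
  have hne_of_gt {w : ℝ} (hw : w ∈ Icc (0 : ℝ) 1) (hlt : sSup Z < w) : X w ≠ 0 :=
    fun h0 => (le_csSup hZbdd ⟨hw, h0⟩).not_gt hlt
  refine ⟨sSup Z, ⟨le_csSup hZbdd hZ0, csSup_le ⟨0, hZ0⟩ fun v hv => hv.1.2⟩, ?_, ?_⟩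
  · intro v hv hlt
    obtain ⟨u, ⟨hu, hXu⟩, hvu⟩ := exists_lt_of_lt_csSup ⟨0, hZ0⟩ hlt
    exact le_antisymm (hXu ▸ hXmono hv hu hvu.le) (hX v hv).1
  · intro v hv hgt
    have hsub : Ioc (sSup Z) v ⊆ Icc 0 1 := fun w hw =>
      ⟨(le_csSup hZbdd hZ0).trans hw.1.le, hw.2.trans hv.2⟩
    have hXeq : ∀ᵐ w ∂volume.restrict (Ioo (sSup Z) v), X w = w := by
      filter_upwards [ae_restrict_of_ae_restrict_of_subset (Ioo_subset_Ioc_self.trans hsub) hae,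
        ae_restrict_mem measurableSet_Ioo] with w hw hwI
      rcases mul_eq_zero.1 hw with h0 | hself
      · exact absurd h0 (hne_of_gt (hsub (Ioo_subset_Ioc_self hwI)) hwI.1)
      · linarith
    exact le_antisymm (hX v hv).2 (hXmono.le_of_ae_restrict_eq_self hgt hsub hXeq)
end

section
/- Let C be a penalty function and suppose its unique non-decreasing argmax selection X of x ↦ x(v - x/2) - C(x) on [-1,1] satisfies: for every v ∈ [0,1], X(v) ∈ {0, v}. Let v₀ = sup{v : X(v) = 0}. Then C is constant equal to some value K on (v₀, 1], and v₀ = √(2K). -/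
open Set

/-- `C` is a penalty function. -/
def IsPenalty (C : ℝ → ℝ) : Prop :=
  (∀ x ∈ Set.Icc (-1 : ℝ) 1, 0 ≤ C x) ∧
  (∀ x ∈ Set.Icc (-1 : ℝ) 1, C (-x) = C x) ∧
  MonotoneOn C (Set.Icc 0 1) ∧
  (∀ x ∈ Set.Icc (0 : ℝ) 1, ContinuousWithinAt C (Set.Ico 0 x) x) ∧
  C 0 = 0

/-!
Write `v₀` for the supremum of the valuations with zero demand. Every `v ∈ (v₀, 1]` demands
`X v = v`, and optimality of `b` against `a` at valuation `b` reads
`C b - C a ≤ (b - a)² / 2` for `a, b ∈ (v₀, 1]`. A function with such a quadratic modulus has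
zero derivative, so `C` is constant on `(v₀, 1]`. Comparing the demand with the alternatives
`0` and `v` gives `C v ≤ v² / 2` above `v₀` and `v² / 2 ≤ C v` on the zero-demand set; by
monotonicity of `C`, letting `v → v₀` from both sides pins the constant to `v₀² / 2`.
-/

open Filter Topology Asymptotics

theorem Convex.is_const_of_norm_sub_le_mul_sq {E F : Type*} [NormedAddCommGroup E]
    [NormedSpace ℝ E] [NormedAddCommGroup F] [NormedSpace ℝ F] {f : E → F} {s : Set E}
    (hs : Convex ℝ s) {c : ℝ} (hf : ∀ x ∈ s, ∀ y ∈ s, ‖f y - f x‖ ≤ c * ‖y - x‖ ^ 2)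
    {x y : E} (hx : x ∈ s) (hy : y ∈ s) : f x = f y := by
  have hderiv : ∀ x ∈ s, HasFDerivWithinAt f (0 : E →L[ℝ] F) s x := by
    intro x hx
    rw [hasFDerivWithinAt_iff_isLittleO]
    have hO : (fun y => f y - f x) =O[𝓝[s] x] fun y => ‖y - x‖ ^ 2 :=
      IsBigO.of_bound c (eventually_nhdsWithin_of_forall fun y hy => by simpa using hf x hx y hy)
    simpa using hO.trans_isLittleO ((isLittleO_pow_sub_sub x one_lt_two).mono nhdsWithin_le_nhds)
  symm
  simpa [sub_eq_zero] using
    hs.norm_image_sub_le_of_norm_hasFDerivWithin_le hderiv (fun _ _ => norm_zero.le) hx hy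

/-- The paper's `ψ_C(x, v)`. -/
noncomputable def surplus (C : ℝ → ℝ) (x v : ℝ) : ℝ := x * (v - x / 2) - C x

lemma sub_le_sq_div_two_of_surplus_le {C : ℝ → ℝ} {a b : ℝ}
    (h : surplus C a b ≤ surplus C b b) : C b - C a ≤ (b - a) ^ 2 / 2 := by
  unfold surplus at h
  nlinarith

lemma sq_div_two_le_sub_of_surplus_le {C : ℝ → ℝ} {v : ℝ}
    (h : surplus C v v ≤ surplus C 0 v) : v ^ 2 / 2 ≤ C v - C 0 := by
  unfold surplus at h
  nlinarith

def zeroDemandSet (X : ℝ → ℝ) : Set ℝ := {v | v ∈ Icc (0 : ℝ) 1 ∧ X v = 0}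

section OptimalChoice

variable {C X : ℝ → ℝ}

lemma zero_mem_zeroDemandSet (hX01 : ∀ v ∈ Icc (0 : ℝ) 1, X v = 0 ∨ X v = v) :
    (0 : ℝ) ∈ zeroDemandSet X :=
  ⟨⟨le_rfl, zero_le_one⟩, by simpa using hX01 0 ⟨le_rfl, zero_le_one⟩⟩

lemma bddAbove_zeroDemandSet : BddAbove (zeroDemandSet X) :=
  ⟨1, fun _ hv => hv.1.2⟩

lemma sSup_zeroDemandSet_nonneg (hX01 : ∀ v ∈ Icc (0 : ℝ) 1, X v = 0 ∨ X v = v) :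
    0 ≤ sSup (zeroDemandSet X) :=
  le_csSup bddAbove_zeroDemandSet (zero_mem_zeroDemandSet hX01)

lemma eq_self_of_mem_Ioc_sSup (hX01 : ∀ v ∈ Icc (0 : ℝ) 1, X v = 0 ∨ X v = v) {v : ℝ}
    (hv : v ∈ Ioc (sSup (zeroDemandSet X)) 1) : X v = v := by
  have hv01 : v ∈ Icc (0 : ℝ) 1 := ⟨(sSup_zeroDemandSet_nonneg hX01).trans hv.1.le, hv.2⟩
  exact (hX01 v hv01).resolve_left fun h =>
    (le_csSup bddAbove_zeroDemandSet ⟨hv01, h⟩).not_gt hv.1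

lemma penalty_sub_le_of_mem_Ioc_sSup
    (hXmax : ∀ v ∈ Icc (0 : ℝ) 1, ∀ y ∈ Icc (-1 : ℝ) 1, surplus C y v ≤ surplus C (X v) v)
    (hX01 : ∀ v ∈ Icc (0 : ℝ) 1, X v = 0 ∨ X v = v) {a b : ℝ}
    (ha : a ∈ Ioc (sSup (zeroDemandSet X)) 1) (hb : b ∈ Ioc (sSup (zeroDemandSet X)) 1) :
    C b - C a ≤ (b - a) ^ 2 / 2 := by
  have h0 := sSup_zeroDemandSet_nonneg hX01
  have := hXmax b ⟨h0.trans hb.1.le, hb.2⟩ a ⟨by linarith [ha.1], ha.2⟩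
  rw [eq_self_of_mem_Ioc_sSup hX01 hb] at this
  exact sub_le_sq_div_two_of_surplus_le this

lemma penalty_eq_of_mem_Ioc_sSup
    (hXmax : ∀ v ∈ Icc (0 : ℝ) 1, ∀ y ∈ Icc (-1 : ℝ) 1, surplus C y v ≤ surplus C (X v) v)
    (hX01 : ∀ v ∈ Icc (0 : ℝ) 1, X v = 0 ∨ X v = v) {a b : ℝ}
    (ha : a ∈ Ioc (sSup (zeroDemandSet X)) 1) (hb : b ∈ Ioc (sSup (zeroDemandSet X)) 1) :
    C a = C b := by
  refine (convex_Ioc _ _).is_const_of_norm_sub_le_mul_sq (c := 1 / 2) (fun x hx y hy => ?_) ha hb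
  have hxy := penalty_sub_le_of_mem_Ioc_sSup hXmax hX01 hx hy
  have hyx := penalty_sub_le_of_mem_Ioc_sSup hXmax hX01 hy hx
  rw [Real.norm_eq_abs, Real.norm_eq_abs, sq_abs, abs_sub_le_iff]
  constructor <;> linarith

lemma penalty_le_of_mem_Ioc_sSup (hC0 : C 0 = 0)
    (hXmax : ∀ v ∈ Icc (0 : ℝ) 1, ∀ y ∈ Icc (-1 : ℝ) 1, surplus C y v ≤ surplus C (X v) v)
    (hX01 : ∀ v ∈ Icc (0 : ℝ) 1, X v = 0 ∨ X v = v) {x : ℝ}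
    (hx : x ∈ Ioc (sSup (zeroDemandSet X)) 1) : C x ≤ sSup (zeroDemandSet X) ^ 2 / 2 := by
  have hle : ∀ v ∈ Ioc (sSup (zeroDemandSet X)) 1, C x ≤ v ^ 2 / 2 := fun v hv => by
    have := hXmax v ⟨(sSup_zeroDemandSet_nonneg hX01).trans hv.1.le, hv.2⟩ 0
      ⟨by norm_num, zero_le_one⟩
    rw [eq_self_of_mem_Ioc_sSup hX01 hv] at this
    linarith [penalty_eq_of_mem_Ioc_sSup hXmax hX01 hx hv, sub_le_sq_div_two_of_surplus_le this]
  refine le_on_closure hle continuousOn_const (by fun_prop) ?_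
  rw [closure_Ioc (hx.1.trans_le hx.2).ne]
  exact ⟨le_rfl, (hx.1.trans_le hx.2).le⟩

lemma le_penalty_of_mem_Ioc_sSup (hCmono : MonotoneOn C (Icc 0 1)) (hC0 : C 0 = 0)
    (hXmax : ∀ v ∈ Icc (0 : ℝ) 1, ∀ y ∈ Icc (-1 : ℝ) 1, surplus C y v ≤ surplus C (X v) v)
    (hX01 : ∀ v ∈ Icc (0 : ℝ) 1, X v = 0 ∨ X v = v) {x : ℝ}
    (hx : x ∈ Ioc (sSup (zeroDemandSet X)) 1) : sSup (zeroDemandSet X) ^ 2 / 2 ≤ C x := by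
  have hle : ∀ a ∈ zeroDemandSet X, a ^ 2 / 2 ≤ C x := fun a ha => by
    have := hXmax a ha.1 a ⟨by linarith [ha.1.1], ha.1.2⟩
    rw [ha.2] at this
    have hax : a ≤ x := (le_csSup bddAbove_zeroDemandSet ha).trans hx.1.le
    have hCa := hCmono ha.1 ⟨ha.1.1.trans hax, hx.2⟩ hax
    linarith [sq_div_two_le_sub_of_surplus_le this]
  exact le_on_closure hle (by fun_prop) continuousOn_const
    (csSup_mem_closure ⟨0, zero_mem_zeroDemandSet hX01⟩ bddAbove_zeroDemandSet)

end OptimalChoice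

theorem stmt_9_general (C : ℝ → ℝ) (hC : IsPenalty C)
    (X : ℝ → ℝ)
    (hXmax : ∀ v ∈ Set.Icc (0 : ℝ) 1, ∀ y ∈ Set.Icc (-1 : ℝ) 1,
      y * (v - y / 2) - C y ≤ X v * (v - X v / 2) - C (X v))
    (hX01 : ∀ v ∈ Set.Icc (0 : ℝ) 1, X v = 0 ∨ X v = v) :
    ∃ K : ℝ,
      (∀ x ∈ Set.Ioc (sSup {v | v ∈ Set.Icc (0 : ℝ) 1 ∧ X v = 0}) (1 : ℝ),
        C x = K) ∧
      sSup {v | v ∈ Set.Icc (0 : ℝ) 1 ∧ X v = 0} = Real.sqrt (2 * K) := by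
  obtain ⟨-, -, hCmono, -, hC0⟩ := hC
  change ∃ K, (∀ x ∈ Ioc (sSup (zeroDemandSet X)) 1, C x = K) ∧
    sSup (zeroDemandSet X) = √(2 * K)
  refine ⟨sSup (zeroDemandSet X) ^ 2 / 2, fun x hx => le_antisymm ?_ ?_, ?_⟩
  · exact penalty_le_of_mem_Ioc_sSup hC0 hXmax hX01 hx
  · exact le_penalty_of_mem_Ioc_sSup hCmono hC0 hXmax hX01 hx
  · rw [mul_div_cancel₀ _ two_ne_zero, Real.sqrt_sq (sSup_zeroDemandSet_nonneg hX01)]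

/-- If the non-decreasing equilibrium demand takes only the values `0` or `v` on
`[0,1]`, then with `v₀ = sup{v : X v = 0}`, the penalty `C` equals a constant
`K` on `(v₀, 1]` and `v₀ = √(2K)`. -/
theorem stmt_9 (C : ℝ → ℝ) (hC : IsPenalty C)
    (X : ℝ → ℝ)
    (hXrange : ∀ v ∈ Set.Icc (0 : ℝ) 1, X v ∈ Set.Icc (-1 : ℝ) 1)
    (hXmax : ∀ v ∈ Set.Icc (0 : ℝ) 1, ∀ y ∈ Set.Icc (-1 : ℝ) 1,
      y * (v - y / 2) - C y ≤ X v * (v - X v / 2) - C (X v))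
    (hXmono : MonotoneOn X (Set.Icc 0 1))
    (hX01 : ∀ v ∈ Set.Icc (0 : ℝ) 1, X v = 0 ∨ X v = v) :
    ∃ K : ℝ,
      (∀ x ∈ Set.Ioc (sSup {v | v ∈ Set.Icc (0 : ℝ) 1 ∧ X v = 0}) (1 : ℝ),
        C x = K) ∧
      sSup {v | v ∈ Set.Icc (0 : ℝ) 1 ∧ X v = 0} = Real.sqrt (2 * K) :=
  stmt_9_general C hC X hXmax hX01
end

section
/- Let g : [0,1] → [0,1] be a function with g(0) = 0 such that v ↦ v - g(v) is non-decreasing (equivalently, (g(y)-g(x))/(y-x) ≤ 1 for all x ≠ y). Define φ(z) = μ({x ∈ [0,1] : g(x) ≥ z}), where μ is Lebesgue measure. Then for all 0 ≤ x < y with φ(y) > 0, one has φ(y) - φ(x) ≤ -(y - x). -/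
open Set MeasureTheory

/-- If `g : [0,1] → [0,1]`, `g 0 = 0`, with difference quotients bounded by 1,
then the level-set measure function `φ(z) = μ{x : g x ≥ z}` satisfies
`φ(y) - φ(x) ≤ -(y - x)` wherever `φ(y) > 0`. -/
theorem stmt_10 (g : ℝ → ℝ) (hgmeas : Measurable g)
    (hgrange : ∀ x ∈ Set.Icc (0 : ℝ) 1, g x ∈ Set.Icc (0 : ℝ) 1)
    (hg0 : g 0 = 0)
    (hslope : ∀ x ∈ Set.Icc (0 : ℝ) 1, ∀ y ∈ Set.Icc (0 : ℝ) 1,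
      x < y → g y - g x ≤ y - x)
    (φ : ℝ → ℝ)
    (hφ : ∀ z, φ z =
      (MeasureTheory.volume {x ∈ Set.Icc (0 : ℝ) 1 | z ≤ g x}).toReal) :
    ∀ x y : ℝ, 0 ≤ x → x < y → 0 < φ y → φ y - φ x ≤ -(y - x) := by
  intro x y hx hxy hφy
  set c : ℝ := y - x with hc
  have hc0 : 0 < c := by simp [hc]; linarith
  set S : Set ℝ := {t ∈ Set.Icc (0 : ℝ) 1 | y ≤ g t} with hS
  set Sx : Set ℝ := {t ∈ Set.Icc (0 : ℝ) 1 | x ≤ g t} with hSx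
  have hSmeas : MeasurableSet S :=
    measurableSet_Icc.inter (hgmeas measurableSet_Ici)
  -- g t ≤ t on S-like points
  have hgle : ∀ t ∈ Set.Icc (0 : ℝ) 1, 0 < g t → g t ≤ t := by
    intro t ht hgt
    rcases eq_or_lt_of_le ht.1 with h | h
    · exfalso; rw [← h, hg0] at hgt; exact lt_irrefl 0 hgt
    · have := hslope 0 (by constructor <;> norm_num) t ht h
      rw [hg0] at this; linarith
  have hySub : S ⊆ Set.Icc y 1 := by
    intro t ht
    have h1 : g t ≤ t := hgle t ht.1 (lt_of_lt_of_le (lt_of_le_of_lt hx hxy) ht.2)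
    exact ⟨le_trans ht.2 h1, ht.1.2⟩
  -- S nonempty
  have hvolS : volume S ≠ 0 := by
    intro h
    rw [hφ y] at hφy
    rw [← hS] at hφy
    rw [h] at hφy; simp at hφy
  have hSne : S.Nonempty := nonempty_of_measure_ne_zero hvolS
  have hbdd : BddAbove S := ⟨1, fun t ht => (hySub ht).2⟩
  set m : ℝ := sSup S with hm
  have hm1 : m ≤ 1 := csSup_le hSne (fun t ht => (hySub ht).2)
  have hmy : y ≤ m := by
    obtain ⟨t, ht⟩ := hSne
    exact le_trans (hySub ht).1 (le_csSup hbdd ht)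
  -- translate of S
  set T : Set ℝ := (· + c) ⁻¹' S with hT
  have hT_sub : T ⊆ Sx := by
    intro s hs
    have ht : s + c ∈ S := hs
    have hs01 : s ∈ Set.Icc (0 : ℝ) 1 := by
      constructor
      · have := (hySub ht).1; linarith
      · have := ht.1.2; linarith
    have hslt : s < s + c := by linarith
    have := hslope s hs01 (s + c) ht.1 hslt
    refine ⟨hs01, ?_⟩
    have h2 : y ≤ g (s + c) := ht.2
    have hcd : c = y - x := rfl
    linarith
  have hI_sub : Set.Ioo (m - c) m ⊆ Sx := by
    intro s hs
    obtain ⟨t, htS, hst⟩ := exists_lt_of_lt_csSup hSne hs.2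
    have htm : t ≤ m := le_csSup hbdd htS
    have hs01 : s ∈ Set.Icc (0 : ℝ) 1 := by
      constructor
      · have := hs.1; have := hmy; linarith
      · linarith [hs.2, hm1]
    have := hslope s hs01 t htS.1 hst
    refine ⟨hs01, ?_⟩
    have hgt : y ≤ g t := htS.2
    have : x ≤ g t - (t - s) := by
      have : t - s < c := by linarith [hs.1]
      linarith
    linarith
  have hdisj : Disjoint T (Set.Ioo (m - c) m) := by
    rw [Set.disjoint_left]
    intro s hsT hsI
    have : s + c ∈ S := hsT
    have : s + c ≤ m := le_csSup hbdd this
    have := hsI.1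
    linarith
  have hTmeas : MeasurableSet T := hSmeas.preimage (measurable_add_const c)
  have hunion : volume T + volume (Set.Ioo (m - c) m) ≤ volume Sx := by
    rw [← measure_union hdisj measurableSet_Ioo]
    exact measure_mono (Set.union_subset hT_sub hI_sub)
  have hvolT : volume T = volume S := by
    rw [hT]; exact measure_preimage_add_right volume c S
  have hIoo : volume (Set.Ioo (m - c) m) = ENNReal.ofReal c := by
    rw [Real.volume_Ioo]; congr 1; ring
  have key : volume S + ENNReal.ofReal c ≤ volume Sx := by
    rw [← hvolT, ← hIoo]; exact hunion
  have hSxfin : volume Sx ≠ ⊤ := by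
    have : volume Sx ≤ volume (Set.Icc (0:ℝ) 1) := measure_mono (Set.sep_subset _ _)
    rw [Real.volume_Icc] at this
    exact ne_top_of_le_ne_top (by simp) this
  have hSfin : volume S ≠ ⊤ := by
    have : volume S ≤ volume Sx := measure_mono (by
      intro t ht; exact ⟨ht.1, le_trans (le_of_lt hxy) ht.2⟩)
    exact ne_top_of_le_ne_top hSxfin this
  have htr : (volume S + ENNReal.ofReal c).toReal ≤ (volume Sx).toReal :=
    ENNReal.toReal_mono hSxfin key
  rw [ENNReal.toReal_add hSfin ENNReal.ofReal_ne_top, ENNReal.toReal_ofReal hc0.le] at htr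
  rw [hφ x, hφ y, ← hS, ← hSx]
  linarith
end

section
/- Fix K ∈ (0, 1/2] and define φ_K(z) = max(√(2K) - z, 0) for z ∈ [0,1]. Let φ : [0,1] → [0,1] be measurable with (φ(y) - φ(x))/(y - x) ≤ -1 for all x < y with φ(y) > 0, and ∫₀¹ φ = K. Then ∫₀¹ y·φ(y) dy ≤ ∫₀¹ y·φ_K(y) dy = (2K)^{3/2}/6, with equality only if φ = φ_K almost everywhere. -/
/-!
Let `g = φ_K` and `s = √(2K)`, so that `∫₀¹ g = K` as well. Since `φ` drops at slope at least
one wherever it is positive while `g` drops at slope at most one, the set `{φ > g}` is an initial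
segment of `[0,1]`: there is a point `t` with `φ ≥ g` before `t` and `φ ≤ g` after it. As
`φ - g` has integral zero, `∫ y (g - φ) = ∫ (t - y) (φ - g) ≥ 0`, and equality forces
`(t - y) (φ - g) = 0` almost everywhere, i.e. `φ = g` almost everywhere.
-/

open Set MeasureTheory

theorem exists_forall_mem_Icc_nonneg_sub_mul {f : ℝ → ℝ} {a b : ℝ}
    (hdown : ∀ x y, a ≤ x → x < y → y ≤ b → 0 < f y → 0 < f x) :
    ∃ t, ∀ y ∈ Icc a b, 0 ≤ (t - y) * f y := by
  -- `a` is inserted only to make `S` nonempty, so that `sSup S` is not the junk value `sSup ∅`.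
  set S := insert a {z ∈ Icc a b | 0 < f z}
  have hS : BddAbove S := (bddAbove_Icc.mono fun _ hz => hz.1).insert a
  refine ⟨sSup S, fun y hy => ?_⟩
  rcases lt_or_ge y (sSup S) with hlt | hge
  · obtain ⟨z, hzS, hyz⟩ := exists_lt_of_lt_csSup (insert_nonempty _ _) hlt
    have hfy : 0 < f y := by
      rcases hzS with rfl | ⟨hz, hfz⟩
      · exact absurd hy.1 hyz.not_ge
      · exact hdown y z hy.1 hyz hz.2 hfz
    exact mul_nonneg (sub_nonneg.2 hlt.le) hfy.le
  · by_cases hfy : 0 < f y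
    · have hle : y ≤ sSup S := le_csSup hS (mem_insert_of_mem _ ⟨hy, hfy⟩)
      simp [le_antisymm hle hge]
    · exact mul_nonneg_of_nonpos_of_nonpos (sub_nonpos.2 hge) (not_lt.1 hfy)

section SingleCrossing

variable {f g : ℝ → ℝ} {a b t : ℝ}

theorem integral_mul_sub_integral_mul_eq_of_integral_eq (hf : IntervalIntegrable f volume a b)
    (hg : IntervalIntegrable g volume a b) (hfg : ∫ x in a..b, f x = ∫ x in a..b, g x) :
    (∫ x in a..b, x * g x) - ∫ x in a..b, x * f x = ∫ x in a..b, (t - x) * (f x - g x) := by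
  have hd : IntervalIntegrable (fun x => f x - g x) volume a b := hf.sub hg
  calc (∫ x in a..b, x * g x) - ∫ x in a..b, x * f x
      = ∫ x in a..b, ((t - x) * (f x - g x) - t * (f x - g x)) := by
        rw [← intervalIntegral.integral_sub (hg.continuousOn_mul (continuousOn_id' _))
          (hf.continuousOn_mul (continuousOn_id' _))]
        congr 1 with x
        ring
    _ = (∫ x in a..b, (t - x) * (f x - g x)) - t * ∫ x in a..b, (f x - g x) := by
        rw [intervalIntegral.integral_sub (hd.continuousOn_mul (by fun_prop)) (hd.const_mul t),
          intervalIntegral.integral_const_mul]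
    _ = ∫ x in a..b, (t - x) * (f x - g x) := by
        rw [intervalIntegral.integral_sub hf hg, hfg, sub_self, mul_zero, sub_zero]

theorem integral_mul_le_of_single_crossing (hab : a ≤ b) (hf : IntervalIntegrable f volume a b)
    (hg : IntervalIntegrable g volume a b) (hfg : ∫ x in a..b, f x = ∫ x in a..b, g x)
    (hcross : ∀ x ∈ Icc a b, 0 ≤ (t - x) * (f x - g x)) :
    ∫ x in a..b, x * f x ≤ ∫ x in a..b, x * g x := by
  have h := integral_mul_sub_integral_mul_eq_of_integral_eq (t := t) hf hg hfg
  linarith [intervalIntegral.integral_nonneg (μ := volume) hab hcross]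

theorem ae_eq_of_integral_mul_eq_of_single_crossing (hab : a ≤ b)
    (hf : IntervalIntegrable f volume a b) (hg : IntervalIntegrable g volume a b)
    (hfg : ∫ x in a..b, f x = ∫ x in a..b, g x)
    (hcross : ∀ x ∈ Icc a b, 0 ≤ (t - x) * (f x - g x))
    (heq : ∫ x in a..b, x * f x = ∫ x in a..b, x * g x) :
    f =ᵐ[volume.restrict (Icc a b)] g := by
  have hzero : ∫ x in a..b, (t - x) * (f x - g x) = 0 := by
    rw [← integral_mul_sub_integral_mul_eq_of_integral_eq hf hg hfg, heq, sub_self]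
  have hae : (fun x => (t - x) * (f x - g x)) =ᵐ[volume.restrict (Ioc a b)] 0 :=
    (intervalIntegral.integral_eq_zero_iff_of_le_of_nonneg_ae hab
      (ae_restrict_of_forall_mem measurableSet_Ioc fun x hx => hcross x (Ioc_subset_Icc_self hx))
      ((hf.sub hg).continuousOn_mul (by fun_prop))).1 hzero
  rw [Measure.restrict_congr_set Ioc_ae_eq_Icc.symm]
  filter_upwards [hae, ae_restrict_of_ae (volume.ae_ne t)] with x hx hxt
  rcases mul_eq_zero.1 hx with h | h
  · exact absurd (sub_eq_zero.1 h).symm hxt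
  · exact sub_eq_zero.1 h

end SingleCrossing

theorem integral_mul_max_sub_zero {f : ℝ → ℝ} (hf : Continuous f) {a b s : ℝ}
    (has : a ≤ s) (hsb : s ≤ b) :
    ∫ z in a..b, f z * max (s - z) 0 = ∫ z in a..s, f z * (s - z) := by
  have hc : Continuous fun z => f z * max (s - z) 0 := by fun_prop
  rw [← intervalIntegral.integral_add_adjacent_intervals (hc.intervalIntegrable a s)
    (hc.intervalIntegrable s b)]
  have hleft : ∫ z in a..s, f z * max (s - z) 0 = ∫ z in a..s, f z * (s - z) :=
    intervalIntegral.integral_congr fun z hz => by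
      rw [uIcc_of_le has] at hz
      simp [max_eq_left (sub_nonneg.2 hz.2)]
  have hright : ∫ z in s..b, f z * max (s - z) 0 = 0 := by
    refine (intervalIntegral.integral_congr (g := fun _ => 0) fun z hz => ?_).trans
      intervalIntegral.integral_zero
    rw [uIcc_of_le hsb] at hz
    simp [max_eq_right (sub_nonpos.2 hz.1)]
  rw [hleft, hright, add_zero]

theorem integral_max_sub_zero {s : ℝ} (hs0 : 0 ≤ s) (hs1 : s ≤ 1) :
    ∫ z in (0 : ℝ)..1, max (s - z) 0 = s ^ 2 / 2 := by
  simpa [intervalIntegral.integral_comp_sub_left (fun x => x)] using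
    integral_mul_max_sub_zero (f := fun _ => (1 : ℝ)) continuous_const hs0 hs1

theorem integral_id_mul_max_sub_zero {s : ℝ} (hs0 : 0 ≤ s) (hs1 : s ≤ 1) :
    ∫ z in (0 : ℝ)..1, z * max (s - z) 0 = s ^ 3 / 6 := by
  rw [integral_mul_max_sub_zero continuous_id' hs0 hs1]
  simp only [show ∀ z : ℝ, z * (s - z) = s * z - z ^ 2 from fun z => by ring]
  rw [intervalIntegral.integral_sub
    ((by fun_prop : Continuous fun z : ℝ => s * z).intervalIntegrable _ _)
    ((continuous_pow 2).intervalIntegrable _ _), intervalIntegral.integral_const_mul,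
    integral_id, integral_pow]
  ring

/-- Among functions `φ : [0,1] → [0,1]` decreasing at rate at least 1 wherever
positive and with integral `K`, the function `φ_K(z) = max(√(2K) - z, 0)`
uniquely maximizes the first moment `∫₀¹ y φ(y) dy`, with value `(2K)^{3/2}/6`. -/
theorem stmt_12 (K : ℝ) (hK : K ∈ Set.Ioc (0 : ℝ) (1/2))
    (φ : ℝ → ℝ) (hφmeas : Measurable φ)
    (hφrange : ∀ z ∈ Set.Icc (0 : ℝ) 1, φ z ∈ Set.Icc (0 : ℝ) 1)
    (hsteep : ∀ x y : ℝ, 0 ≤ x → x < y → y ≤ 1 → 0 < φ y →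
      φ y - φ x ≤ -(y - x))
    (hint : (∫ z in (0 : ℝ)..1, φ z) = K) :
    (∫ y in (0 : ℝ)..1, y * φ y) ≤
      ∫ y in (0 : ℝ)..1, y * max (Real.sqrt (2 * K) - y) 0 ∧
    (∫ y in (0 : ℝ)..1, y * max (Real.sqrt (2 * K) - y) 0) =
      Real.sqrt (2 * K) ^ 3 / 6 ∧
    ((∫ y in (0 : ℝ)..1, y * φ y) = Real.sqrt (2 * K) ^ 3 / 6 →
      ∀ᵐ z ∂(MeasureTheory.volume.restrict (Set.Icc (0 : ℝ) 1)),
        φ z = max (Real.sqrt (2 * K) - z) 0) := by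
  obtain ⟨hK0, hK1⟩ := hK
  set s := Real.sqrt (2 * K)
  have hs0 : 0 ≤ s := Real.sqrt_nonneg _
  have hs1 : s ≤ 1 := Real.sqrt_le_one.mpr (by linarith)
  have hφi : IntervalIntegrable φ volume 0 1 :=
    (intervalIntegrable_iff_integrableOn_Ioc_of_le zero_le_one).2 <|
      Measure.integrableOn_of_bounded (M := 1) measure_Ioc_lt_top.ne hφmeas.aestronglyMeasurable <|
        ae_restrict_of_forall_mem measurableSet_Ioc fun z hz => by
          obtain ⟨h0, h1⟩ := hφrange z (Ioc_subset_Icc_self hz)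
          rwa [Real.norm_of_nonneg h0]
  have hgi : IntervalIntegrable (fun z => max (s - z) 0) volume 0 1 :=
    Continuous.intervalIntegrable (by fun_prop) _ _
  have hfg : ∫ z in (0 : ℝ)..1, φ z = ∫ z in (0 : ℝ)..1, max (s - z) 0 := by
    rw [hint, integral_max_sub_zero hs0 hs1, Real.sq_sqrt (by linarith)]
    ring
  have hdown : ∀ x y, 0 ≤ x → x < y → y ≤ 1 →
      0 < φ y - max (s - y) 0 → 0 < φ x - max (s - x) 0 := by
    intro x y hx hxy hy hgy
    have hφy : 0 < φ y := by linarith [le_max_right (s - y) 0]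
    have hg : max (s - x) 0 ≤ max (s - y) 0 + (y - x) :=
      max_le (by linarith [le_max_left (s - y) 0]) (by linarith [le_max_right (s - y) 0])
    linarith [hsteep x y hx hxy hy hφy]
  obtain ⟨t, hcross⟩ := exists_forall_mem_Icc_nonneg_sub_mul hdown
  have hmom := integral_id_mul_max_sub_zero hs0 hs1
  exact ⟨integral_mul_le_of_single_crossing zero_le_one hφi hgi hfg hcross, hmom, fun heq =>
    ae_eq_of_integral_mul_eq_of_single_crossing zero_le_one hφi hgi hfg hcross
      (heq.trans hmom.symm)⟩
end

section
/- Let K ∈ [0, 1/2], let C be a penalty function with C(x) ≤ K for all x, and let X be the associated non-decreasing equilibrium demand (pointwise maximizer of x(v-x/2)-C(x)). Then ∫₀¹ (v - X(v))² dv ≤ (2K)^{3/2}/3. Consequently the uninformed traders' expected losses |G| = 1/6 - (1/2)∫₀¹(v - X(v))² dv satisfy |G| ≥ (1/6)(1 - (2K)^{3/2}). -/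
/-!
Put `f v = v - X v` and `F v = ∫₀ᵛ f`. Optimality of `X` gives `0 ≤ X v ≤ v`, and the envelope
theorem `ψ' = X` for the value `ψ v = ψ_C(X v, v)` gives `∫₀¹ X = ψ 1 - ψ 0 ≥ 1/2 - C 1`, so
`F 1 = 1/2 - ∫₀¹ X ≤ K`. Monotonicity of `X` means that `f` rises with slope at most one, so on
`[v - f v, v]` it lies above a line and `f v ^ 2 ≤ 2 F v`. Hence `f² ≤ √(2F) F'`, which
integrates to `∫₀¹ f² ≤ √(2 F 1)³/3 ≤ √(2K)³/3`.

Neither `ψ` nor `F` need be differentiable: both integrations only use that a function `H` whose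
increments satisfy `H v - H u ≤ (k v - k u)(v - u)` is antitone, since these errors telescope
over a uniform partition of mesh `1/n`.
-/

open Set

open MeasureTheory intervalIntegral Filter

theorem le_of_forall_sub_le_mul_sub {H k : ℝ → ℝ} {a b : ℝ} (hab : a ≤ b)
    (hH : ∀ u ∈ Icc a b, ∀ v ∈ Icc a b, u ≤ v → H v - H u ≤ (k v - k u) * (v - u)) :
    H b ≤ H a := by
  have bound : ∀ n : ℕ, 0 < n → H b - H a ≤ (k b - k a) * (b - a) / n := by
    intro n hn
    have hδ : 0 ≤ (b - a) / n := div_nonneg (sub_nonneg.mpr hab) (Nat.cast_nonneg n)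
    set t : ℕ → ℝ := fun i => a + i * ((b - a) / n) with ht
    have ht_step : ∀ i, t (i + 1) = t i + (b - a) / n := by
      intro i; simp only [ht]; push_cast; ring
    have ht0 : t 0 = a := by simp [ht]
    have htn : t n = b := by simp only [ht]; field_simp; ring
    have ht_mem : ∀ i ≤ n, t i ∈ Icc a b := by
      intro i hi
      refine ⟨le_add_of_nonneg_right (by positivity), htn ▸ ?_⟩
      simp only [ht]
      gcongr
    calc H b - H a = ∑ i ∈ Finset.range n, (H (t (i + 1)) - H (t i)) := by
          rw [Finset.sum_range_sub (fun i => H (t i)), ht0, htn]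
      _ ≤ ∑ i ∈ Finset.range n, (k (t (i + 1)) - k (t i)) * ((b - a) / n) := by
          refine Finset.sum_le_sum fun i hi => ?_
          have hi : i + 1 ≤ n := Finset.mem_range.mp hi
          simpa only [ht_step i, add_sub_cancel_left] using
            hH _ (ht_mem i (by omega)) _ (ht_mem (i + 1) hi) (by linarith [ht_step i])
      _ = (k b - k a) * (b - a) / n := by
          rw [← Finset.sum_mul, Finset.sum_range_sub (fun i => k (t i)), ht0, htn]
          ring
  have := ge_of_tendsto (tendsto_const_div_atTop_nhds_zero_nat ((k b - k a) * (b - a)))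
    ((eventually_gt_atTop 0).mono bound)
  linarith

theorem IntervalIntegrable.of_mem_Icc {g : ℝ → ℝ} {a b u v : ℝ}
    (h : IntervalIntegrable g volume a b) (hu : u ∈ Icc a b) (hv : v ∈ Icc a b) :
    IntervalIntegrable g volume u v :=
  h.mono_set (uIcc_subset_uIcc (Icc_subset_uIcc hu) (Icc_subset_uIcc hv))

/-- The tangent-line inequality for the convex function `x ↦ √(2x)³/3`, whose derivative
is `√(2x)`. -/
theorem sqrt_two_mul_mul_sub_le {a b : ℝ} (ha : 0 ≤ a) (hab : a ≤ b) :
    √(2 * a) * (b - a) ≤ √(2 * b) ^ 3 / 3 - √(2 * a) ^ 3 / 3 := by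
  have hp : √(2 * a) ^ 2 = 2 * a := Real.sq_sqrt (by linarith)
  have hq : √(2 * b) ^ 2 = 2 * b := Real.sq_sqrt (by linarith)
  have hb : b - a = (√(2 * b) ^ 2 - √(2 * a) ^ 2) / 2 := by rw [hp, hq]; ring
  rw [hb, ← sub_nonneg]
  have key : ∀ p q : ℝ, q ^ 3 / 3 - p ^ 3 / 3 - p * ((q ^ 2 - p ^ 2) / 2) =
      (q - p) ^ 2 * (2 * q + p) / 6 := fun p q => by ring
  rw [key]
  positivity

section SlopeBounded

variable {f : ℝ → ℝ}

theorem intervalIntegrable_of_antitoneOn_sub_id {a b : ℝ} (hab : a ≤ b)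
    (hf : AntitoneOn (fun v => f v - v) (Icc a b)) : IntervalIntegrable f volume a b := by
  have h := (AntitoneOn.intervalIntegrable (a := a) (b := b) (by rwa [uIcc_of_le hab])).add
    (intervalIntegrable_id (a := a) (b := b) (μ := volume))
  simpa using h

theorem sq_le_two_mul_integral (h0 : ∀ v ∈ Icc (0 : ℝ) 1, 0 ≤ f v)
    (hle : ∀ v ∈ Icc (0 : ℝ) 1, f v ≤ v) (hf : AntitoneOn (fun v => f v - v) (Icc 0 1))
    {v : ℝ} (hv : v ∈ Icc (0 : ℝ) 1) : f v ^ 2 ≤ 2 * ∫ t in 0..v, f t := by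
  have hint := intervalIntegrable_of_antitoneOn_sub_id zero_le_one hf
  set c := v - f v
  have hc : c ∈ Icc (0 : ℝ) 1 := ⟨by linarith [hle v hv], by linarith [h0 v hv, hv.2]⟩
  have hcv : c ≤ v := by linarith [h0 v hv]
  have h0c : 0 ≤ ∫ t in 0..c, f t :=
    integral_nonneg hc.1 fun t ht => h0 t ⟨ht.1, ht.2.trans hc.2⟩
  -- On `[c, v]` the graph of `f` lies above the line of slope one through `(v, f v)`,
  -- which vanishes at `c`.
  have hline : ∫ t in c..v, (f v - v + t) ≤ ∫ t in c..v, f t := by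
    refine integral_mono_on hcv (intervalIntegrable_const.add intervalIntegrable_id)
      (hint.of_mem_Icc hc hv) fun t ht => ?_
    have := hf ⟨hc.1.trans ht.1, ht.2.trans hv.2⟩ hv ht.2
    linarith
  have htriangle : ∫ t in c..v, (f v - v + t) = f v ^ 2 / 2 := by
    rw [integral_add intervalIntegrable_const intervalIntegrable_id,
      intervalIntegral.integral_const, integral_id, smul_eq_mul]
    ring
  rw [← integral_add_adjacent_intervals (hint.of_mem_Icc ⟨le_rfl, zero_le_one⟩ hc)
    (hint.of_mem_Icc hc hv)]
  linarith

theorem intervalIntegrable_sq (h0 : ∀ v ∈ Icc (0 : ℝ) 1, 0 ≤ f v)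
    (hle : ∀ v ∈ Icc (0 : ℝ) 1, f v ≤ v) (hint : IntervalIntegrable f volume 0 1) :
    IntervalIntegrable (fun v => f v ^ 2) volume 0 1 := by
  rw [intervalIntegrable_iff_integrableOn_Ioc_of_le zero_le_one] at hint ⊢
  refine Integrable.mono hint (hint.aestronglyMeasurable.pow 2) ?_
  filter_upwards [ae_restrict_mem measurableSet_Ioc] with v hv
  have hv' := Ioc_subset_Icc_self hv
  have hfv : f v ^ 2 ≤ f v := by nlinarith [h0 v hv', hle v hv', hv.2]
  simpa [abs_of_nonneg (h0 v hv')] using hfv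

theorem integral_sq_le_sqrt_mul_integral (h0 : ∀ v ∈ Icc (0 : ℝ) 1, 0 ≤ f v)
    (hle : ∀ v ∈ Icc (0 : ℝ) 1, f v ≤ v) (hf : AntitoneOn (fun v => f v - v) (Icc 0 1))
    {u v : ℝ} (hu : u ∈ Icc (0 : ℝ) 1) (hv : v ∈ Icc (0 : ℝ) 1) (huv : u ≤ v) :
    ∫ t in u..v, f t ^ 2 ≤ √(2 * ∫ t in 0..v, f t) * ∫ t in u..v, f t := by
  have hint := intervalIntegrable_of_antitoneOn_sub_id zero_le_one hf
  rw [← intervalIntegral.integral_const_mul]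
  refine integral_mono_on huv ((intervalIntegrable_sq h0 hle hint).of_mem_Icc hu hv)
    ((hint.of_mem_Icc hu hv).const_mul _) fun t ht => ?_
  have ht01 : t ∈ Icc (0 : ℝ) 1 := ⟨hu.1.trans ht.1, ht.2.trans hv.2⟩
  have hmono : ∫ s in 0..t, f s ≤ ∫ s in 0..v, f s := by
    rw [← integral_add_adjacent_intervals (hint.of_mem_Icc ⟨le_rfl, zero_le_one⟩ ht01)
      (hint.of_mem_Icc ht01 hv), le_add_iff_nonneg_right]
    exact integral_nonneg ht.2 fun s hs => h0 s ⟨ht01.1.trans hs.1, hs.2.trans hv.2⟩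
  have hft : f t ≤ √(2 * ∫ s in 0..v, f s) :=
    Real.le_sqrt_of_sq_le ((sq_le_two_mul_integral h0 hle hf ht01).trans (by linarith))
  rw [sq]
  exact mul_le_mul_of_nonneg_right hft (h0 t ht01)

theorem integral_sq_le_sqrt_two_mul_integral_pow_three (h0 : ∀ v ∈ Icc (0 : ℝ) 1, 0 ≤ f v)
    (hle : ∀ v ∈ Icc (0 : ℝ) 1, f v ≤ v) (hf : AntitoneOn (fun v => f v - v) (Icc 0 1)) :
    ∫ v in 0..1, f v ^ 2 ≤ √(2 * ∫ v in 0..1, f v) ^ 3 / 3 := by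
  have hint := intervalIntegrable_of_antitoneOn_sub_id zero_le_one hf
  have hint2 := intervalIntegrable_sq h0 hle hint
  have h00 : (0 : ℝ) ∈ Icc (0 : ℝ) 1 := ⟨le_rfl, zero_le_one⟩
  set F : ℝ → ℝ := fun v => ∫ t in 0..v, f t with hF
  -- `f t ≤ √(2 F t)` makes `∫₀ᵛ f² - √(2 F v)³/3` antitone.
  suffices H : (∫ v in 0..1, f v ^ 2) - √(2 * F 1) ^ 3 / 3 ≤
      (∫ v in 0..0, f v ^ 2) - √(2 * F 0) ^ 3 / 3 by
    simp only [hF, integral_same, mul_zero, Real.sqrt_zero] at H; linarith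
  refine le_of_forall_sub_le_mul_sub (H := fun v => (∫ t in 0..v, f t ^ 2) - √(2 * F v) ^ 3 / 3)
    (k := fun v => √(2 * F v)) zero_le_one fun u hu v hv huv => ?_
  have hFuv : F v - F u = ∫ t in u..v, f t :=
    integral_interval_sub_left (hint.of_mem_Icc h00 hv) (hint.of_mem_Icc h00 hu)
  have hF_nonneg : 0 ≤ F u := integral_nonneg hu.1 fun t ht => h0 t ⟨ht.1, ht.2.trans hu.2⟩
  have hFuv_nonneg : 0 ≤ F v - F u :=
    hFuv ▸ integral_nonneg huv fun t ht => h0 t ⟨hu.1.trans ht.1, ht.2.trans hv.2⟩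
  have hFuv_le : F v - F u ≤ v - u := by
    rw [hFuv]
    calc ∫ t in u..v, f t ≤ ∫ t in u..v, (1 : ℝ) :=
          integral_mono_on huv (hint.of_mem_Icc hu hv) intervalIntegrable_const
            fun t ht => (hle t ⟨hu.1.trans ht.1, ht.2.trans hv.2⟩).trans (ht.2.trans hv.2)
      _ = v - u := by simp
  have hsq : (∫ t in 0..v, f t ^ 2) - ∫ t in 0..u, f t ^ 2 = ∫ t in u..v, f t ^ 2 :=
    integral_interval_sub_left (hint2.of_mem_Icc h00 hv) (hint2.of_mem_Icc h00 hu)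
  have hA : ∫ t in u..v, f t ^ 2 ≤ √(2 * F v) * (F v - F u) :=
    hFuv ▸ integral_sq_le_sqrt_mul_integral h0 hle hf hu hv huv
  have hB := sqrt_two_mul_mul_sub_le hF_nonneg (sub_nonneg.mp hFuv_nonneg)
  have hk : √(2 * F u) ≤ √(2 * F v) := Real.sqrt_le_sqrt (by linarith)
  calc _ = (∫ t in u..v, f t ^ 2) - (√(2 * F v) ^ 3 / 3 - √(2 * F u) ^ 3 / 3) := by
        rw [← hsq]; ring
    _ ≤ (√(2 * F v) - √(2 * F u)) * (F v - F u) := by linarith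
    _ ≤ (√(2 * F v) - √(2 * F u)) * (v - u) :=
        mul_le_mul_of_nonneg_left hFuv_le (sub_nonneg.mpr hk)

end SlopeBounded

/-- `netProfit C v x` is the paper's `ψ_C(x, v)`. -/
noncomputable def netProfit (C : ℝ → ℝ) (v x : ℝ) : ℝ := x * (v - x / 2) - C x

section Demand

variable {C X : ℝ → ℝ}

theorem demand_zero (hCnn : ∀ x ∈ Icc (-1 : ℝ) 1, 0 ≤ C x) (hC0 : C 0 = 0)
    (hXrange : ∀ v ∈ Icc (-1 : ℝ) 1, X v ∈ Icc (-1 : ℝ) 1)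
    (hX : ∀ v ∈ Icc (-1 : ℝ) 1, IsMaxOn (netProfit C v) (Icc (-1) 1) (X v)) : X 0 = 0 := by
  have h0 : (0 : ℝ) ∈ Icc (-1 : ℝ) 1 := by norm_num
  have hmax : netProfit C 0 0 ≤ netProfit C 0 (X 0) := hX 0 h0 h0
  have hC := hCnn _ (hXrange 0 h0)
  simp only [netProfit, hC0] at hmax
  nlinarith

theorem demand_le_self (hCmono : MonotoneOn C (Icc 0 1))
    (hXrange : ∀ v ∈ Icc (-1 : ℝ) 1, X v ∈ Icc (-1 : ℝ) 1)
    (hX : ∀ v ∈ Icc (-1 : ℝ) 1, IsMaxOn (netProfit C v) (Icc (-1) 1) (X v))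
    {v : ℝ} (hv : v ∈ Icc (0 : ℝ) 1) : X v ≤ v := by
  have hv' : v ∈ Icc (-1 : ℝ) 1 := ⟨by linarith [hv.1], hv.2⟩
  by_contra! hlt
  have hC : C v ≤ C (X v) := hCmono hv ⟨hv.1.trans hlt.le, (hXrange v hv').2⟩ hlt.le
  have hmax : netProfit C v v ≤ netProfit C v (X v) := hX v hv' hv'
  simp only [netProfit] at hmax
  nlinarith

theorem one_half_sub_le_integral_demand {K : ℝ} (hC0 : C 0 = 0) (hC1 : C 1 ≤ K)
    (hXrange : ∀ v ∈ Icc (-1 : ℝ) 1, X v ∈ Icc (-1 : ℝ) 1)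
    (hX : ∀ v ∈ Icc (-1 : ℝ) 1, IsMaxOn (netProfit C v) (Icc (-1) 1) (X v))
    (hXmono : MonotoneOn X (Icc 0 1)) (hX0 : X 0 = 0) :
    1 / 2 - K ≤ ∫ v in 0..1, X v := by
  have hIcc : Icc (0 : ℝ) 1 ⊆ Icc (-1) 1 := Icc_subset_Icc (by norm_num) le_rfl
  have hint : IntervalIntegrable X volume 0 1 :=
    MonotoneOn.intervalIntegrable (by rwa [uIcc_of_le zero_le_one])
  have h00 : (0 : ℝ) ∈ Icc (0 : ℝ) 1 := ⟨le_rfl, zero_le_one⟩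
  set ψ : ℝ → ℝ := fun v => netProfit C v (X v) with hψ
  have henvelope : ψ 1 - ∫ v in 0..1, X v ≤ ψ 0 - ∫ v in 0..0, X v := by
    refine le_of_forall_sub_le_mul_sub (H := fun v => ψ v - ∫ t in 0..v, X t) (k := X)
      zero_le_one fun u hu v hv huv => ?_
    -- The envelope theorem `ψ' = X`, in one-sided form.
    have hψ : ψ v - ψ u ≤ X v * (v - u) := by
      have hmax : netProfit C u (X v) ≤ ψ u := hX u (hIcc hu) (hXrange v (hIcc hv))
      simp only [hψ, netProfit] at hmax ⊢
      linarith
    have hXint : X u * (v - u) ≤ ∫ t in u..v, X t := by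
      calc X u * (v - u) = ∫ _ in u..v, X u := by simp [mul_comm]
        _ ≤ ∫ t in u..v, X t :=
          integral_mono_on huv intervalIntegrable_const (hint.of_mem_Icc hu hv)
            fun t ht => hXmono hu ⟨hu.1.trans ht.1, ht.2.trans hv.2⟩ ht.1
    have hsub := integral_interval_sub_left (hint.of_mem_Icc h00 hv) (hint.of_mem_Icc h00 hu)
    linarith
  have hψ0 : ψ 0 = 0 := by simp [hψ, netProfit, hX0, hC0]
  have hψ1 : 1 / 2 - K ≤ ψ 1 := by
    have h1 : (1 : ℝ) ∈ Icc (-1 : ℝ) 1 := by norm_num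
    have hmax : netProfit C 1 1 ≤ ψ 1 := hX 1 h1 h1
    simp only [netProfit] at hmax
    linarith
  simp only [hψ0, integral_same] at henvelope
  linarith

end Demand

theorem stmt_13_general (K : ℝ)
    (C : ℝ → ℝ) (hC : IsPenalty C)
    (hCcap : ∀ x ∈ Set.Icc (-1 : ℝ) 1, C x ≤ K)
    (X : ℝ → ℝ)
    (hXrange : ∀ v ∈ Set.Icc (-1 : ℝ) 1, X v ∈ Set.Icc (-1 : ℝ) 1)
    (hXmax : ∀ v ∈ Set.Icc (-1 : ℝ) 1, ∀ y ∈ Set.Icc (-1 : ℝ) 1,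
      y * (v - y / 2) - C y ≤ X v * (v - X v / 2) - C (X v))
    (hXmono : MonotoneOn X (Set.Icc (-1) 1)) :
    (∫ v in (0 : ℝ)..1, (v - X v) ^ 2) ≤ Real.sqrt (2 * K) ^ 3 / 3 ∧
    (1 / 6 : ℝ) - (1 / 2) * ∫ v in (0 : ℝ)..1, (v - X v) ^ 2 ≥
      (1 / 6) * (1 - Real.sqrt (2 * K) ^ 3) := by
  obtain ⟨hCnn, -, hCmono, -, hC0⟩ := hC
  have hX : ∀ v ∈ Icc (-1 : ℝ) 1, IsMaxOn (netProfit C v) (Icc (-1) 1) (X v) :=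
    fun v hv y hy => hXmax v hv y hy
  have hXmono' : MonotoneOn X (Icc 0 1) := hXmono.mono (Icc_subset_Icc (by norm_num) le_rfl)
  have hX0 : X 0 = 0 := demand_zero hCnn hC0 hXrange hX
  have hgap := integral_sq_le_sqrt_two_mul_integral_pow_three (f := fun v => v - X v)
    (fun v hv => sub_nonneg.mpr (demand_le_self hCmono hXrange hX hv))
    (fun v hv => sub_le_self _ (hX0 ▸ hXmono' ⟨le_rfl, zero_le_one⟩ hv hv.1))
    (fun u hu v hv huv => by simpa using hXmono' hu hv huv)
  have hmean : ∫ v in (0 : ℝ)..1, (v - X v) ≤ K := by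
    rw [intervalIntegral.integral_sub intervalIntegrable_id
      (MonotoneOn.intervalIntegrable (by rwa [uIcc_of_le zero_le_one])), integral_id]
    linarith [one_half_sub_le_integral_demand hC0 (hCcap 1 (by norm_num)) hXrange hX hXmono' hX0]
  have hbound : (∫ v in (0 : ℝ)..1, (v - X v) ^ 2) ≤ Real.sqrt (2 * K) ^ 3 / 3 :=
    hgap.trans (by gcongr)
  exact ⟨hbound, by linarith⟩

/-- Under the cap `C ≤ K`, the equilibrium demand satisfies
`∫₀¹ (v - X(v))² dv ≤ (2K)^{3/2}/3`, hence the uninformed traders' losses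
satisfy `|G| ≥ (1/6)(1 - (2K)^{3/2})`. -/
theorem stmt_13 (K : ℝ) (hK : K ∈ Set.Icc (0 : ℝ) (1/2))
    (C : ℝ → ℝ) (hC : IsPenalty C)
    (hCcap : ∀ x ∈ Set.Icc (-1 : ℝ) 1, C x ≤ K)
    (X : ℝ → ℝ)
    (hXrange : ∀ v ∈ Set.Icc (-1 : ℝ) 1, X v ∈ Set.Icc (-1 : ℝ) 1)
    (hXmax : ∀ v ∈ Set.Icc (-1 : ℝ) 1, ∀ y ∈ Set.Icc (-1 : ℝ) 1,
      y * (v - y / 2) - C y ≤ X v * (v - X v / 2) - C (X v))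
    (hXmono : MonotoneOn X (Set.Icc (-1) 1)) :
    (∫ v in (0 : ℝ)..1, (v - X v) ^ 2) ≤ Real.sqrt (2 * K) ^ 3 / 3 ∧
    (1 / 6 : ℝ) - (1 / 2) * ∫ v in (0 : ℝ)..1, (v - X v) ^ 2 ≥
      (1 / 6) * (1 - Real.sqrt (2 * K) ^ 3) :=
  stmt_13_general K C hC hCcap X hXrange hXmax hXmono
end

section
/- Fix K ∈ (0,1/2], α ∈ [0, 1 - √(2K)], and define C_α(x) = K·𝟙_{|x| > α}. Then for every v ∈ [0,1], X_α(v) is a maximizer of x ↦ x(v - x/2) - C_α(x) over [0,v], where X_α(v) = v for v ≤ α, X_α(v) = α for α < v ≤ α + √(2K), and X_α(v) = v for v > α + √(2K). -/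
open Set

/-- Under the penalty `C_α(x) = K·1_{|x|>α}`, the schedule `X_α` maximizes the
insider's profit `x(v - x/2) - C_α(x)` over `[0,v]` for each `v ∈ [0,1]`. -/
theorem stmt_15 (K : ℝ) (hK : K ∈ Set.Ioc (0 : ℝ) (1/2))
    (α : ℝ) (hα : α ∈ Set.Icc (0 : ℝ) (1 - Real.sqrt (2 * K)))
    (X : ℝ → ℝ)
    (hX : ∀ v, X v = if v ≤ α then v
      else if v ≤ α + Real.sqrt (2 * K) then α else v) :
    ∀ v ∈ Set.Icc (0 : ℝ) 1, ∀ x ∈ Set.Icc (0 : ℝ) v,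
      x * (v - x / 2) - (if α < |x| then K else 0) ≤
        X v * (v - X v / 2) - (if α < |X v| then K else 0) := by
  obtain ⟨hK0, hK2⟩ := hK
  obtain ⟨hα0, hα1⟩ := hα
  set s := Real.sqrt (2 * K) with hs
  have hs0 : 0 < s := Real.sqrt_pos.2 (by linarith)
  have hs2 : s ^ 2 = 2 * K := Real.sq_sqrt (by linarith)
  intro v hv x hx
  obtain ⟨hv0, hv1⟩ := hv
  obtain ⟨hx0, hxv⟩ := hx
  rw [hX, abs_of_nonneg hx0]
  by_cases h1 : v ≤ α
  · rw [if_pos h1, abs_of_nonneg hv0]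
    split_ifs with h2 h3 h3
    · nlinarith [sq_nonneg (v - x)]
    · linarith
    · linarith
    · nlinarith [sq_nonneg (v - x)]
  · push_neg at h1
    by_cases h2 : v ≤ α + s
    · rw [if_neg (not_le.2 h1), if_pos h2, abs_of_nonneg hα0]
      split_ifs with h3 h4 h4
      · linarith
      · nlinarith [sq_nonneg (v - x), mul_nonneg (show (0:ℝ) ≤ s - (v - α) by linarith)
          (show (0:ℝ) ≤ s + (v - α) by linarith)]
      · linarith
      · push_neg at h3
        nlinarith [mul_nonneg (sub_nonneg.2 h3) (show (0:ℝ) ≤ 2 * v - α - x by linarith)]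
    · push_neg at h2
      rw [if_neg (not_le.2 h1), if_neg (not_le.2 h2), abs_of_nonneg hv0]
      have hv' : α < v := by linarith
      rw [if_pos hv']
      split_ifs with h3
      · nlinarith [sq_nonneg (v - x)]
      · push_neg at h3
        nlinarith [mul_nonneg (show (0:ℝ) ≤ v - x - s by linarith)
          (show (0:ℝ) ≤ v - x + s by linarith)]
end

section
/- Let X : [0,1] → [0,1] be measurable with 0 ≤ X(v) ≤ v. Define G = -∫₀¹ X(v)(v - X(v)/2) dv and S = (1/√3)(1 - ∫₀¹ v X(v) dv). Then G ≥ √3·S - 1 + (3/2)(1 - √3·S)², with equality if and only if X(v) = β v for some constant β ∈ [0,1] (almost everywhere). -/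
open Set MeasureTheory

/-- Quadratic penalties are worst: for any demand schedule `X` with
`0 ≤ X(v) ≤ v`, the pair `(G, S)` satisfies
`G ≥ √3 S - 1 + (3/2)(1 - √3 S)²`, with equality iff `X(v) = βv` a.e. for some
`β ∈ [0,1]`. -/
theorem stmt_16 (X : ℝ → ℝ) (hXmeas : Measurable X)
    (hX : ∀ v ∈ Set.Icc (0 : ℝ) 1, 0 ≤ X v ∧ X v ≤ v)
    (G S : ℝ)
    (hG : G = -∫ v in (0 : ℝ)..1, X v * (v - X v / 2))
    (hS : S = (1 / Real.sqrt 3) * (1 - ∫ v in (0 : ℝ)..1, v * X v)) :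
    G ≥ Real.sqrt 3 * S - 1 + (3 / 2) * (1 - Real.sqrt 3 * S) ^ 2 ∧
    (G = Real.sqrt 3 * S - 1 + (3 / 2) * (1 - Real.sqrt 3 * S) ^ 2 ↔
      ∃ β ∈ Set.Icc (0 : ℝ) 1,
        ∀ᵐ v ∂(MeasureTheory.volume.restrict (Set.Icc (0 : ℝ) 1)),
          X v = β * v) := by
  have h3pos : (0:ℝ) < Real.sqrt 3 := Real.sqrt_pos.mpr (by norm_num)
  have h3 : Real.sqrt 3 * (1 / Real.sqrt 3) = 1 := by
    field_simp
  set μ := volume.restrict (Set.Ioc (0:ℝ) 1) with hμ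
  have hμIcc : volume.restrict (Set.Icc (0:ℝ) 1) = μ := by
    rw [hμ, Measure.restrict_congr_set Ioc_ae_eq_Icc]
  have hfin : IsFiniteMeasure μ := by
    constructor
    rw [hμ, Measure.restrict_apply_univ, Real.volume_Ioc]
    norm_num
  have hbound : ∀ᵐ v ∂μ, 0 ≤ X v ∧ X v ≤ v ∧ v ≤ 1 := by
    rw [hμ, ae_restrict_iff' measurableSet_Ioc]
    filter_upwards with v hv
    obtain ⟨h0, h1⟩ := hX v ⟨le_of_lt hv.1, hv.2⟩
    exact ⟨h0, h1, hv.2⟩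
  -- integrability lemmas
  have hint : ∀ f : ℝ → ℝ, Measurable f → (∀ᵐ v ∂μ, ‖f v‖ ≤ 1) → Integrable f μ := by
    intro f hf hb
    exact Integrable.mono' (integrable_const 1) hf.aestronglyMeasurable hb
  have hintvX : Integrable (fun v => v * X v) μ := by
    refine hint _ (measurable_id.mul hXmeas) ?_
    filter_upwards [hbound] with v ⟨h0, h1, h2⟩
    rw [Real.norm_eq_abs, abs_of_nonneg (mul_nonneg (h0.trans h1) h0)]
    exact mul_le_one₀ h2 h0 (h1.trans h2)
  have hintX2 : Integrable (fun v => (X v)^2) μ := by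
    refine hint _ (hXmeas.pow_const 2) ?_
    filter_upwards [hbound] with v ⟨h0, h1, h2⟩
    rw [Real.norm_eq_abs, abs_of_nonneg (sq_nonneg _)]
    have : X v ≤ 1 := h1.trans h2
    nlinarith
  have hintv2 : Integrable (fun v : ℝ => v^2) μ := by
    refine hint _ (measurable_id.pow_const 2) ?_
    rw [hμ, ae_restrict_iff' measurableSet_Ioc]
    filter_upwards with v hv
    rw [Real.norm_eq_abs, abs_of_nonneg (sq_nonneg _)]
    nlinarith [hv.1.le, hv.2]
  set I1 := ∫ v, v * X v ∂μ with hI1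
  set I2 := ∫ v, (X v)^2 ∂μ with hI2
  have hv2int : ∫ v, v^2 ∂μ = 1/3 := by
    rw [hμ, ← intervalIntegral.integral_of_le (by norm_num : (0:ℝ) ≤ 1)]
    rw [show (1:ℝ)/3 = ∫ x in (0:ℝ)..1, x^2 by simp; norm_num]
  -- basic bounds
  have hI1nn : 0 ≤ I1 := by
    refine integral_nonneg_of_ae ?_
    filter_upwards [hbound] with v ⟨h0, h1, h2⟩
    exact mul_nonneg (h0.trans h1) h0
  have hI1le : I1 ≤ 1/3 := by
    rw [← hv2int]
    refine integral_mono_ae hintvX hintv2 ?_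
    filter_upwards [hbound] with v ⟨h0, h1, h2⟩
    nlinarith
  -- the interval integrals in terms of I1, I2
  have hGint : (∫ v in (0:ℝ)..1, X v * (v - X v / 2)) = I1 - I2 / 2 := by
    rw [intervalIntegral.integral_of_le (by norm_num : (0:ℝ) ≤ 1), ← hμ]
    have : (fun v => X v * (v - X v / 2)) = fun v => v * X v - (X v)^2 / 2 := by
      funext v; ring
    rw [this, integral_sub hintvX (hintX2.div_const 2), integral_div]
  have hSint : (∫ v in (0:ℝ)..1, v * X v) = I1 := by
    rw [intervalIntegral.integral_of_le (by norm_num : (0:ℝ) ≤ 1), ← hμ]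
  have hGval : G = -I1 + I2 / 2 := by rw [hG, hGint]; ring
  have hSval : Real.sqrt 3 * S = 1 - I1 := by
    rw [hS, hSint, ← mul_assoc, h3, one_mul]
  -- key identity: ∫ (X v - 3 I1 v)^2 = I2 - 3 I1^2
  set c := 3 * I1 with hc
  have hA : Integrable (fun v => (X v)^2 - (2*c) * (v * X v)) μ :=
    hintX2.sub (hintvX.const_mul (2*c))
  have hB : Integrable (fun v : ℝ => c^2 * v^2) μ := hintv2.const_mul (c^2)
  have hkey : ∫ v, (X v - c * v)^2 ∂μ = I2 - 3 * I1^2 := by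
    have hpt : (fun v => (X v - c * v)^2)
        = fun v => ((X v)^2 - (2*c) * (v * X v)) + c^2 * v^2 := by
      funext v; ring
    rw [hpt, integral_add hA hB, integral_sub hintX2 (hintvX.const_mul (2*c)),
      integral_const_mul, integral_const_mul, hv2int, ← hI1, ← hI2, hc]
    ring
  have hintsq : Integrable (fun v => (X v - c * v)^2) μ := by
    have hpt : (fun v => (X v - c * v)^2)
        = fun v => ((X v)^2 - (2*c) * (v * X v)) + c^2 * v^2 := by
      funext v; ring
    rw [hpt]
    exact hA.add hB
  have hge : 0 ≤ I2 - 3 * I1^2 := by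
    rw [← hkey]
    exact integral_nonneg fun v => sq_nonneg _
  -- rewrite goal
  have hRHS : Real.sqrt 3 * S - 1 + (3 / 2) * (1 - Real.sqrt 3 * S) ^ 2
      = -I1 + (3/2) * I1^2 := by
    rw [hSval]; ring
  constructor
  · rw [hGval, hRHS]; nlinarith
  · rw [hGval, hRHS]
    constructor
    · intro h
      have heq : I2 - 3 * I1^2 = 0 := by nlinarith
      refine ⟨c, ⟨by positivity, by rw [hc]; linarith⟩, ?_⟩
      rw [hμIcc]
      have h0 : ∫ v, (X v - c * v)^2 ∂μ = 0 := by rw [hkey, heq]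
      have := (integral_eq_zero_iff_of_nonneg_ae
        (Filter.Eventually.of_forall fun v => sq_nonneg (X v - c * v)) hintsq).mp h0
      filter_upwards [this] with v hv
      have : (X v - c * v)^2 = 0 := hv
      have := pow_eq_zero_iff (n := 2) (by norm_num) |>.mp this
      linarith
    · rintro ⟨β, ⟨hβ0, hβ1⟩, hβ⟩
      rw [hμIcc] at hβ
      have e1 : I1 = β / 3 := by
        rw [hI1]
        rw [integral_congr_ae (g := fun v => β * v^2)
          (by filter_upwards [hβ] with v hv; rw [hv]; ring)]
        rw [integral_const_mul, hv2int]; ring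
      have e2 : I2 = β^2 / 3 := by
        rw [hI2]
        rw [integral_congr_ae (g := fun v => β^2 * v^2)
          (by filter_upwards [hβ] with v hv; rw [hv]; ring)]
        rw [integral_const_mul, hv2int]; ring
      rw [e1, e2]; ring
end

section
/- Fix 0 ≤ v₁ ≤ v₂ ≤ 1 with v₂ > 0, and define X_{v₁,v₂}(v) = 0 for v ∈ [0,v₁], X_{v₁,v₂}(v) = (v₂/(v₂-v₁))(v - v₁) for v ∈ (v₁,v₂] (when v₁ < v₂), and X_{v₁,v₂}(v) = v for v ∈ (v₂,1]. Define C_{v₁,v₂}(x) = v₁|x| - (v₁/(2v₂))x² for |x| ≤ v₂ and C_{v₁,v₂}(x) = v₁v₂/2 for |x| > v₂. Then for every v ∈ [0,1], X_{v₁,v₂}(v) maximizes x ↦ x(v - x/2) - C_{v₁,v₂}(x) over x ∈ [0, 1]. -/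
open Set

set_option maxHeartbeats 1000000 in
/-- Implementation: facing the penalty `C_{v₁,v₂}`, the insider's optimal demand
over `[0,1]` is the schedule `X_{v₁,v₂}` (zero, then linear, then identity). -/
theorem stmt_18 (v₁ v₂ : ℝ) (h₁ : 0 ≤ v₁) (h₁₂ : v₁ ≤ v₂) (h₂ : v₂ ≤ 1)
    (hv₂pos : 0 < v₂)
    (X : ℝ → ℝ)
    (hX : ∀ v, X v = if v ≤ v₁ then 0
      else if v ≤ v₂ then (v₂ / (v₂ - v₁)) * (v - v₁) else v)
    (C : ℝ → ℝ)
    (hC : ∀ x, C x = if |x| ≤ v₂ then v₁ * |x| - (v₁ / (2 * v₂)) * x ^ 2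
      else v₁ * v₂ / 2) :
    ∀ v ∈ Set.Icc (0 : ℝ) 1, ∀ x ∈ Set.Icc (0 : ℝ) 1,
      x * (v - x / 2) - C x ≤ X v * (v - X v / 2) - C (X v) := by
  intro v hv x hx
  obtain ⟨hv0, hv1⟩ := hv
  obtain ⟨hx0, hx1⟩ := hx
  have habsx : |x| = x := abs_of_nonneg hx0
  have hv₂ne : v₂ ≠ 0 := ne_of_gt hv₂pos
  rw [hX]
  by_cases hva : v ≤ v₁
  · simp only [if_pos hva]
    rw [hC x, hC 0, habsx, abs_zero, if_pos hv₂pos.le]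
    by_cases hxb : x ≤ v₂
    · rw [if_pos hxb]
      have key : (0 * (v - 0 / 2) - (v₁ * 0 - v₁ / (2 * v₂) * 0 ^ 2))
          - (x * (v - x / 2) - (v₁ * x - v₁ / (2 * v₂) * x ^ 2))
          = (v₁ - v) * x + ((v₂ - v₁) * x ^ 2) / (2 * v₂) := by
        field_simp; ring
      nlinarith [key, mul_nonneg (sub_nonneg.2 hva) hx0,
        div_nonneg (mul_nonneg (sub_nonneg.2 h₁₂) (sq_nonneg x)) (by positivity : (0:ℝ) ≤ 2 * v₂)]
    · rw [if_neg hxb]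
      push_neg at hxb
      have key : (0 * (v - 0 / 2) - (v₁ * 0 - v₁ / (2 * v₂) * 0 ^ 2))
          - (x * (v - x / 2) - v₁ * v₂ / 2)
          = v₁ * v₂ / 2 - x * v + x ^ 2 / 2 := by field_simp; ring
      nlinarith [key, sq_nonneg (x - v₁), mul_nonneg h₁ (sub_nonneg.2 h₁₂),
        mul_nonneg (sub_nonneg.2 hva) hx0]
  · push_neg at hva
    by_cases hvb : v ≤ v₂
    · simp only [if_neg (not_le.2 hva), if_pos hvb]
      have hd : 0 < v₂ - v₁ := by linarith
      have hdne : v₂ - v₁ ≠ 0 := ne_of_gt hd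
      set y := v₂ / (v₂ - v₁) * (v - v₁) with hy
      have hy0 : 0 ≤ y := by
        apply mul_nonneg (by positivity) (by linarith)
      have hyv₂ : y ≤ v₂ := by
        rw [hy, div_mul_eq_mul_div, div_le_iff₀ hd]
        nlinarith
      rw [hC x, hC y, abs_of_nonneg hy0, habsx, if_pos hyv₂]
      by_cases hxb : x ≤ v₂
      · rw [if_pos hxb]
        have key : (y * (v - y / 2) - (v₁ * y - v₁ / (2 * v₂) * y ^ 2))
            - (x * (v - x / 2) - (v₁ * x - v₁ / (2 * v₂) * x ^ 2))
            = ((v₂ - v₁) * (y - x) ^ 2) / (2 * v₂) := by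
          rw [hy]; field_simp; ring
        nlinarith [key, div_nonneg (mul_nonneg hd.le (sq_nonneg (y - x))) (by positivity : (0:ℝ) ≤ 2 * v₂)]
      · rw [if_neg hxb]
        push_neg at hxb
        have key : (y * (v - y / 2) - (v₁ * y - v₁ / (2 * v₂) * y ^ 2))
            - (x * (v - x / 2) - v₁ * v₂ / 2)
            = ((v₂ - v₁) * (y - v₂) ^ 2) / (2 * v₂) + (x - v₂) * (x + v₂ - 2 * v) / 2 := by
          rw [hy]; field_simp; ring
        nlinarith [key,
          div_nonneg (mul_nonneg hd.le (sq_nonneg (y - v₂))) (by positivity : (0:ℝ) ≤ 2 * v₂),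
          mul_nonneg (sub_nonneg.2 hxb.le) (by linarith : (0:ℝ) ≤ x + v₂ - 2 * v)]
    · push_neg at hvb
      simp only [if_neg (not_le.2 hva), if_neg (not_le.2 hvb)]
      have hvpos : 0 < v := lt_trans hv₂pos hvb
      rw [hC x, hC v, habsx, abs_of_nonneg hvpos.le, if_neg (not_le.2 hvb)]
      by_cases hxb : x ≤ v₂
      · rw [if_pos hxb]
        have key : (v * (v - v / 2) - v₁ * v₂ / 2)
            - (x * (v - x / 2) - (v₁ * x - v₁ / (2 * v₂) * x ^ 2))
            = (v₂ * (v - x) ^ 2 - v₁ * (v₂ - x) ^ 2) / (2 * v₂) := by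
          rw [eq_div_iff (by positivity : (2:ℝ) * v₂ ≠ 0)]
          field_simp
          ring
        have h1 : v₂ * (v - x) ^ 2 - v₁ * (v₂ - x) ^ 2 ≥ 0 := by
          have hpos : (0:ℝ) ≤ v + v₂ - 2 * x := by linarith
          nlinarith [mul_nonneg (sub_nonneg.2 h₁₂) (sq_nonneg (v - x)),
            mul_nonneg h₁ (mul_nonneg (sub_pos.2 hvb).le hpos)]
        nlinarith [key, div_nonneg h1 (by positivity : (0:ℝ) ≤ 2 * v₂)]
      · rw [if_neg hxb]
        nlinarith [sq_nonneg (x - v)]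
end
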